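/- There exist elements x, y, z of PSL(2,𝔽₇), each of order exactly 7, with x·y·z = 1 and such that {x, y, z} generates PSL(2,𝔽₇); that is, (0; 7, 7, 7) is a signature of PSL(2,𝔽₇). -/

import Mathlib

/-!
Let `u = [[1, 1], [0, 1]]` and `l = [[1, 0], [3, 1]]` in `SL(2, 𝔽₇)`. Over a prime field
every transvection is a power of any nontrivial one in the same position, and transvections
generate `SL(2, 𝔽ₚ)`, so `u` and `l` generate `SL(2, 𝔽₇)` and their images generate
`PSL(2, 𝔽₇)`.
Non-central transvections have order `7` in `PSL(2, 𝔽₇)`, and so does `u * l`: its trace is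
`-2`, so `-(u * l)` is unipotent and `(u * l) ^ 7 = -1` is central. Take `x = u`, `y = l` and
`z = (u * l)⁻¹`.
-/

open Matrix
open scoped MatrixGroups

theorem QuotientGroup.orderOf_mk_eq_prime {G : Type*} [Group G] {N : Subgroup G} [N.Normal]
    {p : ℕ} [Fact p.Prime] {g : G} (hpow : g ^ p ∈ N) (hg : g ∉ N) :
    orderOf (g : G ⧸ N) = p :=
  orderOf_eq_prime (by rwa [← QuotientGroup.mk_pow, QuotientGroup.eq_one_iff])
    (mt (QuotientGroup.eq_one_iff g).mp hg)

namespace Matrix.SpecialLinearGroup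

variable {ι R : Type*} [Fintype ι] [DecidableEq ι] [CommRing R]

theorem notMem_center_of_apply_ne_zero {g : SpecialLinearGroup ι R} {i j : ι} (hij : i ≠ j)
    (hg : g i j ≠ 0) : g ∉ Subgroup.center (SpecialLinearGroup ι R) := by
  intro hc
  obtain ⟨r, -, hr⟩ := mem_center_iff.mp hc
  exact hg (by simpa [hij] using congr($hr i j).symm)

theorem transvection_pow {i j : ι} (hij : i ≠ j) (c : R) (n : ℕ) :
    transvection hij c ^ n = transvection hij (n * c) := by
  induction n with
  | zero => simp
  | succ n ih => rw [pow_succ, ih, ← transvection_add, Nat.cast_succ, add_one_mul]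

theorem transvection_pow_char (p : ℕ) [CharP R p] {i j : ι} (hij : i ≠ j) (c : R) :
    transvection hij c ^ p = 1 := by
  simp [transvection_pow]

theorem orderOf_mk_transvection {p : ℕ} [Fact p.Prime] [CharP R p] {i j : ι} (hij : i ≠ j)
    {c : R} (hc : c ≠ 0) :
    orderOf (transvection hij c : ProjectiveSpecialLinearGroup ι R) = p :=
  QuotientGroup.orderOf_mk_eq_prime (by simp [transvection_pow_char])
    (mt (transvection_mem_center_iff hij c).mp hc)

theorem transvection_mem_of_ne_zero {p : ℕ} [Fact p.Prime]
    {K : Subgroup (SpecialLinearGroup ι (ZMod p))} {i j : ι} (hij : i ≠ j) {a : ZMod p}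
    (ha : a ≠ 0) (hK : transvection hij a ∈ K) (c : ZMod p) : transvection hij c ∈ K := by
  rw [← div_mul_cancel₀ c ha, ← ZMod.natCast_zmod_val (c / a), ← transvection_pow]
  exact pow_mem hK _

end Matrix.SpecialLinearGroup

namespace Matrix

variable {p : ℕ} [Fact p.Prime]

theorem SL2.closure_transvection_pair_eq_top {a b : ZMod p} (ha : a ≠ 0) (hb : b ≠ 0) :
    Subgroup.closure {SpecialLinearGroup.transvection zero_ne_one a,
      SpecialLinearGroup.transvection one_ne_zero b} = (⊤ : Subgroup SL(2, ZMod p)) := by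
  refine eq_top_iff.mpr fun g _ ↦ SL2.transvection_induction (· ∈ Subgroup.closure _)
    (fun i j hij c ↦ ?_) (fun _ _ ↦ mul_mem) g
  fin_cases i <;> fin_cases j
  · exact absurd rfl hij
  · exact SpecialLinearGroup.transvection_mem_of_ne_zero hij ha
      (Subgroup.subset_closure (by simp)) c
  · exact SpecialLinearGroup.transvection_mem_of_ne_zero hij hb
      (Subgroup.subset_closure (by simp)) c
  · exact absurd rfl hij

theorem ProjectiveSpecialLinearGroup.closure_mk_transvection_pair_eq_top {a b : ZMod p}
    (ha : a ≠ 0) (hb : b ≠ 0) :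
    Subgroup.closure
      {((SpecialLinearGroup.transvection zero_ne_one a : SL(2, ZMod p)) : PSL(2, ZMod p)),
        ((SpecialLinearGroup.transvection one_ne_zero b : SL(2, ZMod p)) : PSL(2, ZMod p))} =
      ⊤ := by
  rw [← QuotientGroup.coe_mk', ← Set.image_pair, ← MonoidHom.map_closure,
    SL2.closure_transvection_pair_eq_top ha hb,
    Subgroup.map_top_of_surjective _ (QuotientGroup.mk'_surjective _)]

end Matrix

instance fact_prime_seven : Fact (Nat.Prime 7) := ⟨by norm_num⟩

open Matrix.SpecialLinearGroup in
theorem orderOf_mk_transvection_one_mul_transvection_three :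
    orderOf ((transvection zero_ne_one 1 * transvection one_ne_zero 3 : SL(2, ZMod 7)) :
      PSL(2, ZMod 7)) = 7 :=
  QuotientGroup.orderOf_mk_eq_prime (mem_center_iff.mpr ⟨-1, by decide, by decide⟩)
    (notMem_center_of_apply_ne_zero zero_ne_one (by decide))

open Matrix.SpecialLinearGroup in
/-- `(0; 7, 7, 7)` is a signature of `PSL(2, 𝔽₇)`. -/
theorem signature_0_7_7_7_PSL2_F7 :
    ∃ x y z : Matrix.ProjectiveSpecialLinearGroup (Fin 2) (ZMod 7),
      orderOf x = 7 ∧ orderOf y = 7 ∧ orderOf z = 7 ∧ x * y * z = 1 ∧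
      Subgroup.closure {x, y, z} = ⊤ := by
  have h3 : (3 : ZMod 7) ≠ 0 := by decide
  refine ⟨(transvection zero_ne_one 1 : SL(2, ZMod 7)),
    (transvection one_ne_zero 3 : SL(2, ZMod 7)), _, orderOf_mk_transvection _ one_ne_zero,
    orderOf_mk_transvection _ h3, ?_, mul_inv_cancel _, ?_⟩
  · rw [orderOf_inv, ← QuotientGroup.mk_mul, orderOf_mk_transvection_one_mul_transvection_three]
  · rw [eq_top_iff,
      ← ProjectiveSpecialLinearGroup.closure_mk_transvection_pair_eq_top one_ne_zero h3]
    exact Subgroup.closure_mono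
      (Set.insert_subset_insert (Set.singleton_subset_iff.mpr (Set.mem_insert _ _)))
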